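/- arXiv:1303.5697 — 3 statements merged into one kernel-verified Lean document; each statement's English description precedes it below -/
import Mathlib

section
/- Let J be a B(H)-ideal and 𝒮 ⊆ J. Then span_ℂ({AX : A ∈ J, X ∈ 𝒮} ∪ {XA : A ∈ J, X ∈ 𝒮}) + J(𝒮)J is a J-ideal, and one has the inclusions J(𝒮)J ⊆ span_ℂ({AX : A ∈ J, X ∈ 𝒮} ∪ {XA : A ∈ J, X ∈ 𝒮}) + J(𝒮)J ⊆ (𝒮)_J, where J(𝒮)J is the set of finite sums Σ A_iX_iB_i with A_i, B_i ∈ J and X_i ∈ (𝒮). -/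
/-!
Multiplying a generator `AX` or `XA` of `span(J𝒮 ∪ 𝒮J)` by `B ∈ J` on the side of `A` gives
another generator, and on the other side a term `AXB` of `J(𝒮)J`, which is itself an ideal of
`B(H)`; so the sum is a `J`-ideal. For minimality, given a `J`-ideal `I ⊇ 𝒮`, the operators `X`
with `J X J ⊆ I` form a `B(H)`-ideal containing `𝒮`, hence containing `(𝒮)`, so `J(𝒮)J ⊆ I`.
-/

open Pointwise

variable {H : Type*} [NormedAddCommGroup H] [InnerProductSpace ℂ H] [CompleteSpace H]
  [TopologicalSpace.SeparableSpace H]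

/-- A `B(H)`-ideal: a two-sided ideal of the algebra `B(H)` of bounded operators on `H`. -/
def IsBHIdeal (J : Set (H →L[ℂ] H)) : Prop :=
  0 ∈ J ∧ (∀ x ∈ J, ∀ y ∈ J, x + y ∈ J) ∧
    (∀ (A : H →L[ℂ] H), ∀ x ∈ J, A * x ∈ J) ∧
    (∀ (A : H →L[ℂ] H), ∀ x ∈ J, x * A ∈ J)

/-- `I` is a `J`-ideal (a subideal): a `ℂ`-linear subspace of `B(H)` contained in `J` that is
closed under left and right multiplication by elements of `J`. -/
def IsSubideal (J I : Set (H →L[ℂ] H)) : Prop :=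
  I ⊆ J ∧ 0 ∈ I ∧ (∀ x ∈ I, ∀ y ∈ I, x + y ∈ I) ∧
    (∀ (c : ℂ), ∀ x ∈ I, c • x ∈ I) ∧
    (∀ A ∈ J, ∀ x ∈ I, A * x ∈ I ∧ x * A ∈ I)

/-- `(𝒮)_J`, the smallest `J`-ideal containing the set `𝒮`. -/
def subidealGen (J 𝒮 : Set (H →L[ℂ] H)) : Set (H →L[ℂ] H) :=
  ⋂₀ {I | IsSubideal J I ∧ 𝒮 ⊆ I}

/-- `(𝒮)`, the smallest `B(H)`-ideal containing the set `𝒮`. -/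
def idealGen (𝒮 : Set (H →L[ℂ] H)) : Set (H →L[ℂ] H) :=
  ⋂₀ {I | IsBHIdeal I ∧ 𝒮 ⊆ I}

/-- The product `IJ` of two ideals: the set of finite sums `Σ Xᵢ Yᵢ` with `Xᵢ ∈ I`, `Yᵢ ∈ J`. -/
def idealProd (I J : Set (H →L[ℂ] H)) : Set (H →L[ℂ] H) :=
  {T | ∃ (n : ℕ) (X Y : Fin n → (H →L[ℂ] H)),
    (∀ i, X i ∈ I) ∧ (∀ i, Y i ∈ J) ∧ T = ∑ i, X i * Y i}

/-- `J(𝒮)J`: the set of finite sums `Σ Aᵢ Xᵢ Bᵢ` with `Aᵢ, Bᵢ ∈ J` and `Xᵢ ∈ (𝒮)`. -/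
def JSJ (J 𝒮 : Set (H →L[ℂ] H)) : Set (H →L[ℂ] H) :=
  {T | ∃ (n : ℕ) (A X B : Fin n → (H →L[ℂ] H)),
    (∀ i, A i ∈ J) ∧ (∀ i, B i ∈ J) ∧ (∀ i, X i ∈ idealGen 𝒮) ∧
    T = ∑ i, A i * X i * B i}

/-- `U_J(H)`: the unitaries of the form `1 + A` with `A ∈ J`. -/
def unitaryJ (J : Set (H →L[ℂ] H)) : Set (H →L[ℂ] H) :=
  {U | U ∈ unitary (H →L[ℂ] H) ∧ U - 1 ∈ J}

section

omit [CompleteSpace H] [TopologicalSpace.SeparableSpace H]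

variable {J 𝒮 I : Set (H →L[ℂ] H)}

lemma IsBHIdeal.smul_mem (hJ : IsBHIdeal J) (c : ℂ) {x : H →L[ℂ] H} (hx : x ∈ J) :
    c • x ∈ J := by
  simpa using hJ.2.2.1 (c • 1) x hx

lemma IsBHIdeal.isSubideal_self (hJ : IsBHIdeal J) : IsSubideal J J :=
  ⟨subset_rfl, hJ.1, hJ.2.1, fun c _ hx => hJ.smul_mem c hx,
    fun A _ x hx => ⟨hJ.2.2.1 A x hx, hJ.2.2.2 A x hx⟩⟩

def IsSubideal.toSubmodule (hI : IsSubideal J I) : Submodule ℂ (H →L[ℂ] H) where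
  carrier := I
  zero_mem' := hI.2.1
  add_mem' hx hy := hI.2.2.1 _ hx _ hy
  smul_mem' c x hx := hI.2.2.2.1 c x hx

lemma Submodule.isSubideal (P : Submodule ℂ (H →L[ℂ] H)) (hPJ : (P : Set (H →L[ℂ] H)) ⊆ J)
    (hmul : ∀ A ∈ J, ∀ x ∈ P, A * x ∈ P ∧ x * A ∈ P) : IsSubideal J P :=
  ⟨hPJ, P.zero_mem, fun _ hx _ hy => P.add_mem hx hy, fun c _ hx => P.smul_mem c hx, hmul⟩

lemma subset_subidealGen {M : Set (H →L[ℂ] H)}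
    (h : ∀ I, IsSubideal J I → 𝒮 ⊆ I → M ⊆ I) : M ⊆ subidealGen J 𝒮 :=
  Set.subset_sInter fun I hI => h I hI.1 hI.2

lemma subset_idealGen : 𝒮 ⊆ idealGen 𝒮 :=
  fun _ hx _ hI => hI.2 hx

lemma idealGen_subset (hI : IsBHIdeal I) (hS : 𝒮 ⊆ I) : idealGen 𝒮 ⊆ I :=
  Set.sInter_subset_of_mem ⟨hI, hS⟩

lemma isBHIdeal_idealGen : IsBHIdeal (idealGen 𝒮) :=
  ⟨fun _ hI => hI.1.1, fun _ hx _ hy I hI => hI.1.2.1 _ (hx I hI) _ (hy I hI),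
    fun A _ hx I hI => hI.1.2.2.1 A _ (hx I hI), fun A _ hx I hI => hI.1.2.2.2 A _ (hx I hI)⟩

lemma mul_mul_mem_of_mem_idealGen (hJ : IsBHIdeal J) (hI : IsSubideal J I) (hS : 𝒮 ⊆ I)
    {A X B : H →L[ℂ] H} (hA : A ∈ J) (hX : X ∈ idealGen 𝒮) (hB : B ∈ J) : A * X * B ∈ I := by
  let K : Set (H →L[ℂ] H) := {X | ∀ A ∈ J, ∀ B ∈ J, A * X * B ∈ I}
  have hK : IsBHIdeal K := by
    refine ⟨fun A _ B _ => by simpa using hI.2.1, fun x hx y hy A hA B hB => ?_,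
      fun C x hx A hA B hB => ?_, fun C x hx A hA B hB => ?_⟩
    · simpa [mul_add, add_mul] using hI.2.2.1 _ (hx A hA B hB) _ (hy A hA B hB)
    · simpa [mul_assoc] using hx (A * C) (hJ.2.2.2 C A hA) B hB
    · simpa [mul_assoc] using hx A hA (C * B) (hJ.2.2.1 C B hB)
  have hSK : 𝒮 ⊆ K := fun X hX A hA B hB =>
    (hI.2.2.2.2 B hB _ (hI.2.2.2.2 A hA X (hS hX)).1).2
  exact idealGen_subset hK hSK hX A hA B hB

lemma zero_mem_JSJ : (0 : H →L[ℂ] H) ∈ JSJ J 𝒮 :=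
  ⟨0, Fin.elim0, Fin.elim0, Fin.elim0, (·.elim0), (·.elim0), (·.elim0), by simp⟩

lemma mul_mul_mem_JSJ {A X B : H →L[ℂ] H} (hA : A ∈ J) (hX : X ∈ idealGen 𝒮) (hB : B ∈ J) :
    A * X * B ∈ JSJ J 𝒮 :=
  ⟨1, fun _ => A, fun _ => X, fun _ => B, fun _ => hA, fun _ => hB, fun _ => hX, by simp⟩

lemma add_mem_JSJ {x y : H →L[ℂ] H} (hx : x ∈ JSJ J 𝒮) (hy : y ∈ JSJ J 𝒮) :
    x + y ∈ JSJ J 𝒮 := by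
  obtain ⟨n, A, X, B, hA, hB, hX, rfl⟩ := hx
  obtain ⟨m, A', X', B', hA', hB', hX', rfl⟩ := hy
  refine ⟨n + m, Fin.append A A', Fin.append X X', Fin.append B B', ?_, ?_, ?_, ?_⟩ <;>
    simp [Fin.forall_fin_add, Fin.sum_univ_add, *]

lemma smul_mem_JSJ (c : ℂ) {x : H →L[ℂ] H} (hx : x ∈ JSJ J 𝒮) : c • x ∈ JSJ J 𝒮 := by
  obtain ⟨n, A, X, B, hA, hB, hX, rfl⟩ := hx
  refine ⟨n, A, fun i => c • X i, B, hA, hB,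
    fun i => isBHIdeal_idealGen.smul_mem c (hX i), ?_⟩
  simp [Finset.smul_sum]

lemma mul_mem_JSJ_left (hJ : IsBHIdeal J) (C : H →L[ℂ] H) {x : H →L[ℂ] H}
    (hx : x ∈ JSJ J 𝒮) : C * x ∈ JSJ J 𝒮 := by
  obtain ⟨n, A, X, B, hA, hB, hX, rfl⟩ := hx
  refine ⟨n, fun i => C * A i, X, B, fun i => hJ.2.2.1 C (A i) (hA i), hB, hX, ?_⟩
  simp [Finset.mul_sum, mul_assoc]

lemma mul_mem_JSJ_right (hJ : IsBHIdeal J) (C : H →L[ℂ] H) {x : H →L[ℂ] H}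
    (hx : x ∈ JSJ J 𝒮) : x * C ∈ JSJ J 𝒮 := by
  obtain ⟨n, A, X, B, hA, hB, hX, rfl⟩ := hx
  refine ⟨n, A, X, fun i => B i * C, hA, fun i => hJ.2.2.2 C (B i) (hB i), hX, ?_⟩
  simp [Finset.sum_mul, mul_assoc]

lemma JSJ_subset_of_isSubideal (hJ : IsBHIdeal J) (hI : IsSubideal J I)
    (hS : 𝒮 ⊆ I) : JSJ J 𝒮 ⊆ I := by
  rintro x ⟨n, A, X, B, hA, hB, hX, rfl⟩
  exact hI.toSubmodule.sum_mem fun i _ =>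
    mul_mul_mem_of_mem_idealGen hJ hI hS (hA i) (hX i) (hB i)

variable (J 𝒮) in
def JSJSubmodule : Submodule ℂ (H →L[ℂ] H) where
  carrier := JSJ J 𝒮
  zero_mem' := zero_mem_JSJ
  add_mem' := add_mem_JSJ
  smul_mem' c _ hx := smul_mem_JSJ c hx

variable (J 𝒮) in
def oneSidedProducts : Set (H →L[ℂ] H) :=
  {T | ∃ A ∈ J, ∃ X ∈ 𝒮, T = A * X} ∪ {T | ∃ A ∈ J, ∃ X ∈ 𝒮, T = X * A}

variable (J 𝒮) in
def middleSubideal : Submodule ℂ (H →L[ℂ] H) :=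
  Submodule.span ℂ (oneSidedProducts J 𝒮) ⊔ JSJSubmodule J 𝒮

lemma coe_middleSubideal :
    (middleSubideal J 𝒮 : Set (H →L[ℂ] H)) =
      (Submodule.span ℂ (oneSidedProducts J 𝒮) : Set (H →L[ℂ] H)) + JSJ J 𝒮 :=
  Submodule.coe_sup _ _

lemma JSJ_subset_middleSubideal : JSJ J 𝒮 ⊆ middleSubideal J 𝒮 :=
  fun _ hx => (le_sup_right : JSJSubmodule J 𝒮 ≤ middleSubideal J 𝒮) hx

lemma oneSidedProducts_subset_of_isSubideal (hI : IsSubideal J I) (hS : 𝒮 ⊆ I) :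
    oneSidedProducts J 𝒮 ⊆ I := by
  rintro T (⟨A, hA, X, hX, rfl⟩ | ⟨A, hA, X, hX, rfl⟩)
  · exact (hI.2.2.2.2 A hA X (hS hX)).1
  · exact (hI.2.2.2.2 A hA X (hS hX)).2

lemma middleSubideal_le (hJ : IsBHIdeal J) (hI : IsSubideal J I) (hS : 𝒮 ⊆ I) :
    middleSubideal J 𝒮 ≤ hI.toSubmodule :=
  sup_le (Submodule.span_le.2 (oneSidedProducts_subset_of_isSubideal hI hS))
    (JSJ_subset_of_isSubideal hJ hI hS)

lemma mul_mem_middleSubideal_of_mem_oneSidedProducts (hJ : IsBHIdeal J) {A T : H →L[ℂ] H}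
    (hA : A ∈ J) (hT : T ∈ oneSidedProducts J 𝒮) :
    A * T ∈ middleSubideal J 𝒮 ∧ T * A ∈ middleSubideal J 𝒮 := by
  have hspan : oneSidedProducts J 𝒮 ⊆ middleSubideal J 𝒮 :=
    fun _ hT => (le_sup_left : Submodule.span ℂ _ ≤ middleSubideal J 𝒮) (Submodule.subset_span hT)
  rcases hT with ⟨A', hA', X, hX, rfl⟩ | ⟨A', hA', X, hX, rfl⟩
  · refine ⟨?_, JSJ_subset_middleSubideal (mul_mul_mem_JSJ hA' (subset_idealGen hX) hA)⟩
    rw [← mul_assoc]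
    exact hspan (Or.inl ⟨A * A', hJ.2.2.1 A A' hA', X, hX, rfl⟩)
  · refine ⟨?_, ?_⟩
    · rw [← mul_assoc]
      exact JSJ_subset_middleSubideal (mul_mul_mem_JSJ hA (subset_idealGen hX) hA')
    · rw [mul_assoc]
      exact hspan (Or.inr ⟨A' * A, hJ.2.2.2 A A' hA', X, hX, rfl⟩)

lemma mul_mem_middleSubideal (hJ : IsBHIdeal J) {A x : H →L[ℂ] H} (hA : A ∈ J)
    (hx : x ∈ middleSubideal J 𝒮) :
    A * x ∈ middleSubideal J 𝒮 ∧ x * A ∈ middleSubideal J 𝒮 := by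
  have key : middleSubideal J 𝒮 ≤ (middleSubideal J 𝒮).comap (LinearMap.mulLeft ℂ A) ⊓
      (middleSubideal J 𝒮).comap (LinearMap.mulRight ℂ A) :=
    sup_le (Submodule.span_le.2 fun _ hT => mul_mem_middleSubideal_of_mem_oneSidedProducts hJ hA hT)
      fun _ hk => ⟨JSJ_subset_middleSubideal (mul_mem_JSJ_left hJ A hk),
        JSJ_subset_middleSubideal (mul_mem_JSJ_right hJ A hk)⟩
  exact key hx

lemma isSubideal_middleSubideal (hJ : IsBHIdeal J) (h𝒮 : 𝒮 ⊆ J) :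
    IsSubideal J (middleSubideal J 𝒮) :=
  (middleSubideal J 𝒮).isSubideal (middleSubideal_le hJ hJ.isSubideal_self h𝒮)
    fun _ hA _ hx => mul_mem_middleSubideal hJ hA hx

lemma middleSubideal_subset_subidealGen (hJ : IsBHIdeal J) :
    (middleSubideal J 𝒮 : Set (H →L[ℂ] H)) ⊆ subidealGen J 𝒮 :=
  subset_subidealGen fun _ hI hS => middleSubideal_le hJ hI hS

end

theorem middle_subideal_general (J 𝒮 : Set (H →L[ℂ] H)) (hJ : IsBHIdeal J)
    (h𝒮 : 𝒮 ⊆ J) :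
    IsSubideal J
        (((Submodule.span ℂ
            ({T | ∃ A ∈ J, ∃ X ∈ 𝒮, T = A * X} ∪
              {T | ∃ A ∈ J, ∃ X ∈ 𝒮, T = X * A}) : Submodule ℂ (H →L[ℂ] H)) :
            Set (H →L[ℂ] H)) + JSJ J 𝒮) ∧
      JSJ J 𝒮 ⊆
        ((Submodule.span ℂ
            ({T | ∃ A ∈ J, ∃ X ∈ 𝒮, T = A * X} ∪
              {T | ∃ A ∈ J, ∃ X ∈ 𝒮, T = X * A}) : Submodule ℂ (H →L[ℂ] H)) :
            Set (H →L[ℂ] H)) + JSJ J 𝒮 ∧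
      ((Submodule.span ℂ
          ({T | ∃ A ∈ J, ∃ X ∈ 𝒮, T = A * X} ∪
            {T | ∃ A ∈ J, ∃ X ∈ 𝒮, T = X * A}) : Submodule ℂ (H →L[ℂ] H)) :
          Set (H →L[ℂ] H)) + JSJ J 𝒮 ⊆ subidealGen J 𝒮 := by
  rw [← oneSidedProducts, ← coe_middleSubideal]
  exact ⟨isSubideal_middleSubideal hJ h𝒮, JSJ_subset_middleSubideal,
    middleSubideal_subset_subidealGen hJ⟩

/-- `span(J𝒮 ∪ 𝒮J) + J(𝒮)J` is a `J`-ideal sandwiched between `J(𝒮)J`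
and `(𝒮)_J`. -/
theorem middle_subideal (J 𝒮 : Set (H →L[ℂ] H)) (hJ : IsBHIdeal J)
    (hinf : ¬FiniteDimensional ℂ H) (h𝒮 : 𝒮 ⊆ J) :
    IsSubideal J
        (((Submodule.span ℂ
            ({T | ∃ A ∈ J, ∃ X ∈ 𝒮, T = A * X} ∪
              {T | ∃ A ∈ J, ∃ X ∈ 𝒮, T = X * A}) : Submodule ℂ (H →L[ℂ] H)) :
            Set (H →L[ℂ] H)) + JSJ J 𝒮) ∧
      JSJ J 𝒮 ⊆
        ((Submodule.span ℂ
            ({T | ∃ A ∈ J, ∃ X ∈ 𝒮, T = A * X} ∪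
              {T | ∃ A ∈ J, ∃ X ∈ 𝒮, T = X * A}) : Submodule ℂ (H →L[ℂ] H)) :
            Set (H →L[ℂ] H)) + JSJ J 𝒮 ∧
      ((Submodule.span ℂ
          ({T | ∃ A ∈ J, ∃ X ∈ 𝒮, T = A * X} ∪
            {T | ∃ A ∈ J, ∃ X ∈ 𝒮, T = X * A}) : Submodule ℂ (H →L[ℂ] H)) :
          Set (H →L[ℂ] H)) + JSJ J 𝒮 ⊆ subidealGen J 𝒮 :=
  middle_subideal_general J 𝒮 hJ h𝒮
end

section
/- Let J be a B(H)-ideal, 𝓘 a J-ideal, and A ∈ J such that U := 1 + A is a unitary operator on H. Then U X U* ∈ 𝓘 for every X ∈ 𝓘; that is, 𝓘 is invariant under conjugation by every unitary of the form 1 + A with A ∈ J. -/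
open Pointwise

variable {H : Type*} [NormedAddCommGroup H] [InnerProductSpace ℂ H] [CompleteSpace H]
  [TopologicalSpace.SeparableSpace H]

theorem star_eq_neg_star_one_add_mul_of_star_mul_self_eq_one {R : Type*} [Ring R] [StarRing R]
    {a : R} (h : star (1 + a) * (1 + a) = 1) : star a = -(star (1 + a) * a) := by
  rw [mul_add, mul_one, star_add, star_one, add_assoc, add_eq_left] at h
  rw [star_add, star_one]
  exact eq_neg_of_add_eq_zero_left h

section

variable {E : Type*} [NormedAddCommGroup E] [InnerProductSpace ℂ E]

theorem IsBHIdeal.star_mem_of_one_add_mem_unitary [CompleteSpace E] {J : Set (E →L[ℂ] E)}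
    (hJ : IsBHIdeal J) {A : E →L[ℂ] E} (hA : A ∈ J) (hU : 1 + A ∈ unitary (E →L[ℂ] E)) :
    star A ∈ J := by
  rw [star_eq_neg_star_one_add_mul_of_star_mul_self_eq_one hU.1, ← neg_mul]
  exact hJ.2.2.1 _ A hA

theorem IsSubideal.one_add_mul_mul_one_add_mem {J I : Set (E →L[ℂ] E)} (hI : IsSubideal J I)
    {B C X : E →L[ℂ] E} (hB : B ∈ J) (hC : C ∈ J) (hX : X ∈ I) :
    (1 + B) * X * (1 + C) ∈ I := by
  obtain ⟨-, -, hI_add, -, hI_mul⟩ := hI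
  have hBX : B * X ∈ I := (hI_mul B hB X hX).1
  have expand : (1 + B) * X * (1 + C) = X + B * X + X * C + B * X * C := by noncomm_ring
  rw [expand]
  exact hI_add _ (hI_add _ (hI_add _ hX _ hBX) _ (hI_mul C hC X hX).2) _ (hI_mul C hC _ hBX).2

end

theorem subideal_unitaryJ_invariant_general (J I : Set (H →L[ℂ] H)) (hJ : IsBHIdeal J)
    (hI : IsSubideal J I)
    (A : H →L[ℂ] H) (hA : A ∈ J) (hU : (1 + A) ∈ unitary (H →L[ℂ] H)) :
    ∀ X ∈ I, (1 + A) * X * star (1 + A) ∈ I := by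
  intro X hX
  rw [star_add, star_one]
  exact hI.one_add_mul_mul_one_add_mem hA (hJ.star_mem_of_one_add_mem_unitary hA hU) hX

/-- a `J`-ideal is invariant under conjugation by unitaries of the form `1 + A`,
`A ∈ J`. -/
theorem subideal_unitaryJ_invariant (J I : Set (H →L[ℂ] H)) (hJ : IsBHIdeal J)
    (hinf : ¬FiniteDimensional ℂ H) (hI : IsSubideal J I)
    (A : H →L[ℂ] H) (hA : A ∈ J) (hU : (1 + A) ∈ unitary (H →L[ℂ] H)) :
    ∀ X ∈ I, (1 + A) * X * star (1 + A) ∈ I :=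
  subideal_unitaryJ_invariant_general J I hJ hI A hA hU
end

section
/- Let J be a nonzero B(H)-ideal and 𝓘 a nonzero J-ideal. Then 𝓘 contains every finite-rank operator: every T ∈ B(H) whose range is finite-dimensional belongs to 𝓘. -/
open Pointwise

variable {H : Type*} [NormedAddCommGroup H] [InnerProductSpace ℂ H] [CompleteSpace H]
  [TopologicalSpace.SeparableSpace H]

/-!
Take a nonzero `X ∈ I`, a vector `e` with `X e ≠ 0` and (Hahn–Banach) a functional `g`
with `g (X e) = 1`. Then every rank-one operator `f(·) • u` factors as
`(g(·) • u) * X * (f(·) • e)`. As `X ∈ J`, this first puts every rank-one operator in `J`;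
then both outer factors lie in `J`, so every rank-one operator lies in `I`.
A finite-rank operator is a finite sum of rank-one operators.
-/

namespace ContinuousLinearMap

theorem smulRight_eq_smulRight_mul_mul_smulRight {R M : Type*} [CommSemiring R]
    [TopologicalSpace R] [AddCommMonoid M] [TopologicalSpace M] [Module R M]
    [ContinuousSMul R M] (f g : StrongDual R M) (X : M →L[R] M) {e : M} (he : g (X e) = 1)
    (u : M) : f.smulRight u = g.smulRight u * X * f.smulRight e := by
  ext x
  simp [he]

theorem exists_forall_smulRight_eq_smulRight_mul_mul_smulRight {R M : Type*} [Field R]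
    [TopologicalSpace R] [IsTopologicalRing R] [AddCommGroup M] [TopologicalSpace M] [Module R M]
    [ContinuousSMul R M] [SeparatingDual R M] {X : M →L[R] M} (hX : X ≠ 0) :
    ∃ (g : StrongDual R M) (e : M),
      ∀ (f : StrongDual R M) (u : M), f.smulRight u = g.smulRight u * X * f.smulRight e := by
  obtain ⟨e, he⟩ := DFunLike.ne_iff.mp hX
  obtain ⟨g, hg⟩ := SeparatingDual.exists_eq_one (R := R) he
  exact ⟨g, e, fun f u ↦ smulRight_eq_smulRight_mul_mul_smulRight f g X hg u⟩

theorem exists_eq_sum_smulRight_of_finiteDimensional_range {𝕜 E F : Type*}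
    [NontriviallyNormedField 𝕜] [CompleteSpace 𝕜] [AddCommGroup E] [TopologicalSpace E]
    [Module 𝕜 E] [AddCommGroup F] [TopologicalSpace F] [IsTopologicalAddGroup F] [Module 𝕜 F]
    [ContinuousSMul 𝕜 F] [T2Space F] (T : E →L[𝕜] F)
    [FiniteDimensional 𝕜 (LinearMap.range (T : E →ₗ[𝕜] F))] :
    ∃ (n : ℕ) (f : Fin n → StrongDual 𝕜 E) (u : Fin n → F),
      T = ∑ i, (f i).smulRight (u i) := by
  set V := LinearMap.range (T : E →ₗ[𝕜] F)
  let b := Module.finBasis 𝕜 V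
  refine ⟨_, fun i ↦ LinearMap.toContinuousLinearMap (b.coord i) ∘L
    T.codRestrict V fun x ↦ ⟨x, rfl⟩, fun i ↦ b i, ?_⟩
  ext x
  have hx := congrArg Subtype.val (b.sum_repr (T.codRestrict V (fun x ↦ ⟨x, rfl⟩) x))
  simp only [Submodule.coe_sum, Submodule.coe_smul] at hx
  simp only [sum_apply, smulRight_apply, comp_apply]
  exact hx.symm

end ContinuousLinearMap

section

variable {E : Type*} [NormedAddCommGroup E] [InnerProductSpace ℂ E]

namespace IsBHIdeal

theorem smulRight_mem {J : Set (E →L[ℂ] E)} (hJ : IsBHIdeal J) {X : E →L[ℂ] E}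
    (hXJ : X ∈ J) (hX : X ≠ 0) (f : StrongDual ℂ E) (u : E) : f.smulRight u ∈ J := by
  obtain ⟨g, e, hfactor⟩ :=
    ContinuousLinearMap.exists_forall_smulRight_eq_smulRight_mul_mul_smulRight hX
  rw [hfactor]
  exact hJ.2.2.2 _ _ (hJ.2.2.1 _ _ hXJ)

end IsBHIdeal

namespace IsSubideal

variable {J I : Set (E →L[ℂ] E)}

theorem smulRight_mem (hJ : IsBHIdeal J) (hI : IsSubideal J I) {X : E →L[ℂ] E} (hXI : X ∈ I)
    (hX : X ≠ 0) (f : StrongDual ℂ E) (u : E) : f.smulRight u ∈ I := by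
  obtain ⟨g, e, hfactor⟩ :=
    ContinuousLinearMap.exists_forall_smulRight_eq_smulRight_mul_mul_smulRight hX
  have hXJ : X ∈ J := hI.1 hXI
  rw [hfactor]
  exact (hI.2.2.2.2 _ (hJ.smulRight_mem hXJ hX f e) _
    (hI.2.2.2.2 _ (hJ.smulRight_mem hXJ hX g u) _ hXI).1).2

theorem sum_mem (hI : IsSubideal J I) {ι : Type*} (s : Finset ι) {T : ι → E →L[ℂ] E}
    (hT : ∀ i ∈ s, T i ∈ I) : ∑ i ∈ s, T i ∈ I :=
  Finset.sum_induction _ (· ∈ I) (fun _ _ hx hy ↦ hI.2.2.1 _ hx _ hy) hI.2.1 hT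

end IsSubideal

end

theorem subideal_contains_finiteRank_general (J I : Set (H →L[ℂ] H)) (hJ : IsBHIdeal J)
    (hI : IsSubideal J I) (hIne : ∃ x ∈ I, x ≠ 0) :
    ∀ T : H →L[ℂ] H, FiniteDimensional ℂ (LinearMap.range (T : H →ₗ[ℂ] H)) → T ∈ I := by
  obtain ⟨X, hXI, hX⟩ := hIne
  intro T hT
  obtain ⟨n, f, u, rfl⟩ := T.exists_eq_sum_smulRight_of_finiteDimensional_range
  exact hI.sum_mem _ fun i _ ↦ hI.smulRight_mem hJ hXI hX (f i) (u i)

/-- every nonzero `J`-ideal contains all finite-rank operators. -/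
theorem subideal_contains_finiteRank (J I : Set (H →L[ℂ] H)) (hJ : IsBHIdeal J)
    (hinf : ¬FiniteDimensional ℂ H) (hI : IsSubideal J I)
    (hJne : ∃ x ∈ J, x ≠ 0) (hIne : ∃ x ∈ I, x ≠ 0) :
    ∀ T : H →L[ℂ] H, FiniteDimensional ℂ (LinearMap.range (T : H →ₗ[ℂ] H)) → T ∈ I :=
  subideal_contains_finiteRank_general J I hJ hI hIne
end
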